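/- arXiv:1606.06663 — 2 statements merged into one kernel-verified Lean document; each statement's English description precedes it below -/
import Mathlib

section
/- Let G be a connected simple graph and let k ≥ 2 be a natural number. If G has a spanning k-end tree (a spanning tree with exactly k leaves) and |V(G)| > k + 1, then there exists an edge e of G such that the contraction G/e has a spanning k-end tree. -/
open scoped Classical

/-- The contraction `G/e` of a simple graph `G` along the edge `e = uv`:
the edge `e` is deleted, its end vertices `u` and `v` are identified
(the merged vertex is represented by `u`, and `v` is removed from the vertex set),
and parallel edges are deleted so that the result is again a simple graph. -/
def SimpleGraph.contract {V : Type*} (G : SimpleGraph V) (u v : V) :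
    SimpleGraph {x : V // x ≠ v} where
  Adj a b := a ≠ b ∧
    (G.Adj a.1 b.1 ∨ (a.1 = u ∧ G.Adj v b.1) ∨ (b.1 = u ∧ G.Adj v a.1))
  symm := by
    constructor
    rintro a b ⟨hne, h | ⟨h1, h2⟩ | ⟨h1, h2⟩⟩
    · exact ⟨hne.symm, Or.inl h.symm⟩
    · exact ⟨hne.symm, Or.inr (Or.inr ⟨h1, h2⟩)⟩
    · exact ⟨hne.symm, Or.inr (Or.inl ⟨h1, h2⟩)⟩
  loopless := by constructor; rintro a ⟨hne, -⟩; exact hne rfl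

/-- The number of leaves (vertices of degree one) of a graph. -/
noncomputable def SimpleGraph.leafCount {V : Type*} [Fintype V] (T : SimpleGraph V) : ℕ :=
  {x : V | T.degree x = 1}.ncard

/-- `G` has a spanning `k`-end tree: a spanning tree with exactly `k` leaves. -/
def SimpleGraph.HasSpanningEndTree {V : Type*} [Fintype V] (G : SimpleGraph V) (k : ℕ) : Prop :=
  ∃ T : SimpleGraph V, T ≤ G ∧ T.IsTree ∧ T.leafCount = k

/-!
Take a spanning tree `T` of `G` with `k` leaves. As `|V| > k + 1`, `T` has two vertices of degree
at least two, and the first step of the path from one to the other gives two adjacent such vertices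
`u`, `v`. A tree has no triangles, so `u` and `v` have no common neighbour: in `T/uv` the merged
vertex has degree `deg u + deg v - 2 ≥ 2` and all other degrees are unchanged. By the degree sum
formula `T/uv` has one edge fewer on one vertex fewer, so it is a spanning tree of `G/uv`, and it
has the same `k` leaves as `T`.
-/

namespace SimpleGraph

variable {V : Type*}

lemma IsAcyclic.not_adj_of_adj_of_adj {G : SimpleGraph V} (hG : G.IsAcyclic) {u v w : V}
    (huv : G.Adj u v) (huw : G.Adj u w) : ¬ G.Adj v w := fun hvw =>
  hG.cliqueFree le_rfl {u, v, w} (is3Clique_triple_iff.2 ⟨huv, huw, hvw⟩)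

lemma Preconnected.exists_adj_two_le_degree [Fintype V] {G : SimpleGraph V} (hG : G.Preconnected)
    {a b : V} (hab : a ≠ b) (hb : 2 ≤ G.degree b) : ∃ x, G.Adj a x ∧ 2 ≤ G.degree x := by
  obtain ⟨p, hp⟩ := (hG a b).exists_isPath
  cases p with
  | nil => exact absurd rfl hab
  | @cons _ x _ hax q =>
    refine ⟨x, hax, ?_⟩
    cases q with
    | nil => exact hb
    | @cons _ y _ hxy r =>
      have hay : a ≠ y := fun h => ((Walk.cons_isPath_iff _ _).1 hp).2 (by simp [h])
      exact Finset.one_lt_card.2 ⟨a, by simpa using hax.symm, y, by simpa using hxy, hay⟩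

lemma Preconnected.exists_ne_two_le_degree [Fintype V] {G : SimpleGraph V} (hG : G.Preconnected)
    (h : G.leafCount + 1 < Fintype.card V) :
    ∃ a b, a ≠ b ∧ 2 ≤ G.degree a ∧ 2 ≤ G.degree b := by
  have : Nontrivial V := Fintype.one_lt_card_iff_nontrivial.1 (by omega)
  have hdeg : ∀ x, G.degree x ≠ 1 → 2 ≤ G.degree x := fun x hx => by
    have := hG.degree_pos_of_nontrivial x
    omega
  have hinternal : 1 < {x : V | G.degree x = 1}ᶜ.ncard := by
    have := Set.ncard_add_ncard_compl {x : V | G.degree x = 1}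
    rw [Nat.card_eq_fintype_card] at this
    unfold leafCount at h
    omega
  obtain ⟨a, b, ha, hb, hab⟩ := (Set.one_lt_ncard_iff (Set.toFinite _)).1 hinternal
  exact ⟨a, b, hab, hdeg a ha, hdeg b hb⟩

section Contract

variable {G H : SimpleGraph V} {u v : V}

lemma contract_mono (h : G ≤ H) : G.contract u v ≤ H.contract u v := fun _ _ ⟨hne, hadj⟩ =>
  ⟨hne, hadj.imp (@h _ _) (Or.imp (And.imp_right (@h _ _)) (And.imp_right (@h _ _)))⟩

noncomputable def contractVert (huv : u ≠ v) (x : V) : {x : V // x ≠ v} :=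
  if h : x = v then ⟨u, huv⟩ else ⟨x, h⟩

@[simp]
lemma contractVert_self (huv : u ≠ v) : contractVert huv v = ⟨u, huv⟩ := dif_pos rfl

@[simp]
lemma contractVert_of_ne (huv : u ≠ v) {x : V} (hx : x ≠ v) : contractVert huv x = ⟨x, hx⟩ :=
  dif_neg hx

lemma contractVert_injOn (huv : u ≠ v) {s : Set V} (hs : u ∈ s → v ∉ s) :
    Set.InjOn (contractVert huv) s := by
  intro x hx y hy hxy
  by_cases hxv : x = v <;> by_cases hyv : y = v
  all_goals simp_all [Subtype.ext_iff]

lemma contract_adj_contractVert (huv : u ≠ v) {x y : V} (hxy : G.Adj x y)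
    (hne : contractVert huv x ≠ contractVert huv y) :
    (G.contract u v).Adj (contractVert huv x) (contractVert huv y) := by
  refine ⟨hne, ?_⟩
  by_cases hxv : x = v <;> by_cases hyv : y = v
  all_goals simp_all [adj_comm]

lemma Connected.contract (hG : G.Connected) (huv : u ≠ v) : (G.contract u v).Connected := by
  have : Nonempty {x // x ≠ v} := ⟨⟨u, huv⟩⟩
  refine Connected.mk fun a b => ?_
  have hstep (x y : V) (hxy : G.Adj x y) :
      Relation.ReflTransGen (G.contract u v).Adj (contractVert huv x) (contractVert huv y) := by
    by_cases hne : contractVert huv x = contractVert huv y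
    · rw [hne]
    · exact .single (contract_adj_contractVert huv hxy hne)
  have := ((reachable_iff_reflTransGen a.1 b.1).1 (hG.preconnected a b)).lift' _ hstep
  simp only [Function.onFun, contractVert_of_ne huv a.2, contractVert_of_ne huv b.2] at this
  exact (reachable_iff_reflTransGen a b).2 this

variable [Fintype V]

lemma degree_contract_of_ne (huv : u ≠ v) (hcommon : ∀ w, G.Adj u w → ¬ G.Adj v w)
    {w : {x : V // x ≠ v}} (hwu : w.1 ≠ u) : (G.contract u v).degree w = G.degree w.1 := by
  have hw : contractVert huv w.1 = w := contractVert_of_ne huv w.2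
  refine (Finset.card_nbij (contractVert huv) ?_ ?_ ?_).symm
  · intro x hx
    simp only [Finset.mem_coe, mem_neighborFinset] at hx ⊢
    rw [← hw]
    refine contract_adj_contractVert huv hx ?_
    by_cases hxv : x = v
    · simp [hxv, hw, Subtype.ext_iff, hwu]
    · simp [hxv, hw, Subtype.ext_iff, hx.ne]
  · exact contractVert_injOn huv fun hu hv => hcommon w (by simpa [adj_comm] using hu)
      (by simpa [adj_comm] using hv)
  · intro b hb
    rw [Finset.mem_coe, mem_neighborFinset] at hb
    obtain ⟨-, hadj | ⟨hw', -⟩ | ⟨hbu, hvw⟩⟩ := hb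
    · exact ⟨b, by simpa using hadj, contractVert_of_ne huv b.2⟩
    · exact absurd hw' hwu
    · exact ⟨v, by simpa [adj_comm] using hvw, by simp [Subtype.ext_iff, hbu]⟩

lemma degree_contract_self (huv : G.Adj u v) (hcommon : ∀ w, G.Adj u w → ¬ G.Adj v w) :
    (G.contract u v).degree ⟨u, huv.ne⟩ = (G.degree u - 1) + (G.degree v - 1) := by
  have hdisj : Disjoint ((G.neighborFinset u).erase v) ((G.neighborFinset v).erase u) :=
    Finset.disjoint_left.2 fun w hu hv => hcommon w (by simp_all) (by simp_all)
  rw [degree, degree, degree, ← Finset.card_erase_of_mem (G.mem_neighborFinset _ _ |>.2 huv),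
    ← Finset.card_erase_of_mem (G.mem_neighborFinset _ _ |>.2 huv.symm),
    ← Finset.card_union_of_disjoint hdisj]
  refine (Finset.card_nbij (contractVert huv.ne) ?_ ?_ ?_).symm
  · intro x hx
    simp only [Finset.coe_union, Set.mem_union, Finset.mem_coe, Finset.mem_erase,
      mem_neighborFinset] at hx ⊢
    have hxv : x ≠ v := hx.elim And.left fun h => h.2.ne'
    have hxu : x ≠ u := hx.elim (fun h => h.2.ne') And.left
    rw [contractVert_of_ne _ hxv]
    exact ⟨by simpa [Subtype.ext_iff] using hxu.symm,
      hx.imp And.right fun h => Or.inl ⟨rfl, h.2⟩⟩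
  · exact contractVert_injOn huv.ne fun _ hv => by simp at hv
  · intro b hb
    rw [Finset.mem_coe, mem_neighborFinset] at hb
    obtain ⟨hne, hadj | ⟨-, hvb⟩ | ⟨hbu, -⟩⟩ := hb
    · exact ⟨b, by simp [b.2, hadj], contractVert_of_ne _ b.2⟩
    · have hbu : b.1 ≠ u := fun h => hne (Subtype.ext h.symm)
      exact ⟨b, by simp [hbu, hvb], contractVert_of_ne _ b.2⟩
    · exact absurd (Subtype.ext hbu) (Ne.symm hne)

lemma sum_degree_contract_add_two (huv : G.Adj u v) (hcommon : ∀ w, G.Adj u w → ¬ G.Adj v w) :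
    ∑ w, (G.contract u v).degree w + 2 = ∑ x, G.degree x := by
  set u' : {x : V // x ≠ v} := ⟨u, huv.ne⟩
  have hrest : ∑ w ∈ Finset.univ.erase u', (G.contract u v).degree w =
      ∑ w ∈ Finset.univ.erase u', G.degree w.1 :=
    Finset.sum_congr rfl fun w hw =>
      degree_contract_of_ne huv.ne hcommon fun h => (Finset.mem_erase.1 hw).1 (Subtype.ext h)
  rw [Fintype.sum_eq_add_sum_subtype_ne _ v, ← Finset.add_sum_erase _ _ (Finset.mem_univ u'),
    ← Finset.add_sum_erase _ _ (Finset.mem_univ u'), hrest, degree_contract_self huv hcommon]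
  dsimp only [u']
  have := (G.degree_pos_iff_exists_adj u).2 ⟨v, huv⟩
  have := (G.degree_pos_iff_exists_adj v).2 ⟨u, huv.symm⟩
  omega

lemma IsTree.contract (hG : G.IsTree) (huv : G.Adj u v) : (G.contract u v).IsTree := by
  have hsum := sum_degree_contract_add_two huv fun _ => hG.isAcyclic.not_adj_of_adj_of_adj huv
  rw [sum_degrees_eq_twice_card_edges, sum_degrees_eq_twice_card_edges] at hsum
  have hcard := hG.card_edgeFinset
  rw [isTree_iff_connected_and_card, Nat.card_eq_fintype_card, Nat.card_eq_fintype_card,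
    ← edgeFinset_card, Fintype.card_subtype_compl, Fintype.card_subtype_eq]
  exact ⟨hG.connected.contract huv.ne, by omega⟩

lemma leafCount_contract (huv : G.Adj u v) (hcommon : ∀ w, G.Adj u w → ¬ G.Adj v w)
    (hu : 2 ≤ G.degree u) (hv : 2 ≤ G.degree v) :
    (G.contract u v).leafCount = G.leafCount := by
  have hleaves : {x : V | G.degree x = 1} =
      Subtype.val '' {w : {x // x ≠ v} | (G.contract u v).degree w = 1} := by
    ext x
    constructor
    · intro hx
      have hxv : x ≠ v := by rintro rfl; simp_all
      have hxu : x ≠ u := by rintro rfl; simp_all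
      exact ⟨⟨x, hxv⟩, (degree_contract_of_ne huv.ne hcommon hxu).trans hx, rfl⟩
    · rintro ⟨w, hw, rfl⟩
      have hwu : w.1 ≠ u := by
        intro h
        rw [Set.mem_ofPred_eq, show w = ⟨u, huv.ne⟩ from Subtype.ext h,
          degree_contract_self huv hcommon] at hw
        omega
      exact (degree_contract_of_ne huv.ne hcommon hwu).symm.trans hw
  rw [leafCount, leafCount, hleaves, Set.ncard_image_of_injective _ Subtype.val_injective]

lemma hasSpanningEndTree_contract {T : SimpleGraph V} (hTG : T ≤ G) (hT : T.IsTree)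
    (huv : T.Adj u v) (hu : 2 ≤ T.degree u) (hv : 2 ≤ T.degree v) :
    (G.contract u v).HasSpanningEndTree T.leafCount :=
  ⟨T.contract u v, contract_mono hTG, hT.contract huv,
    leafCount_contract huv (fun _ => hT.isAcyclic.not_adj_of_adj_of_adj huv) hu hv⟩

end Contract

end SimpleGraph

theorem contraction_hasSpanningEndTree_general {V : Type*} [Fintype V] (G : SimpleGraph V) (k : ℕ)
    (hT : G.HasSpanningEndTree k)
    (hcard : k + 1 < Fintype.card V) :
    ∃ u v : V, G.Adj u v ∧ (G.contract u v).HasSpanningEndTree k := by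
  obtain ⟨T, hTG, hTree, rfl⟩ := hT
  have hpre := hTree.connected.preconnected
  obtain ⟨a, b, hab, ha, hb⟩ := hpre.exists_ne_two_le_degree hcard
  obtain ⟨x, hax, hx⟩ := hpre.exists_adj_two_le_degree hab hb
  exact ⟨a, x, hTG hax, SimpleGraph.hasSpanningEndTree_contract hTG hTree hax ha hx⟩

/-- If a connected graph `G` has a spanning `k`-end tree (`k ≥ 2`) and `|V(G)| > k + 1`,
then there is an edge `e = uv` of `G` such that `G/e` has a spanning `k`-end tree. -/
theorem contraction_hasSpanningEndTree {V : Type*} [Fintype V] (G : SimpleGraph V) (k : ℕ)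
    (hk : 2 ≤ k) (hconn : G.Connected) (hT : G.HasSpanningEndTree k)
    (hcard : k + 1 < Fintype.card V) :
    ∃ u v : V, G.Adj u v ∧ (G.contract u v).HasSpanningEndTree k :=
  contraction_hasSpanningEndTree_general G k hT hcard
end

section
/- Let G be a simple graph with |V(G)| ≥ 3. If for every two non-adjacent vertices v and w of G we have deg(v) + deg(w) ≥ |V(G)| − 1, then G has a Hamiltonian path, i.e., a spanning tree with exactly 2 leaves. -/
open scoped Classical

/-!
Ore's condition forces two non-adjacent vertices to have a common neighbour, so `G` is connected.
Let `P = a ⋯ b` be a path that cannot be extended at either end, so that all neighbours of `a`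
and `b` lie on `P`. If `a ~ b`, then `P` closes up to a cycle. Otherwise
`deg a + deg b ≥ n - 1 ≥ |P|`, and counting the consecutive pairs `(xᵢ, xᵢ₊₁)` of `P` gives one with
`b ~ xᵢ` and `a ~ xᵢ₊₁`, so `xᵢ ⋯ a xᵢ₊₁ ⋯ b xᵢ` is a cycle through the vertices of `P`. If `P`
misses a vertex, connectivity yields an edge from outside into this cycle, and opening the cycle
there gives a longer path. So a longest path is Hamiltonian, and a Hamiltonian path is a spanning
tree whose leaves are its two ends.
-/

namespace List

variable {α : Type*}

theorem exists_eq_append_cons_cons_of_length_tail_lt {p q : α → Prop} [DecidablePred p]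
    [DecidablePred q] (l : List α)
    (h : l.tail.length < l.tail.countP (p ·) + l.dropLast.countP (q ·)) :
    ∃ s x y r, l = s ++ x :: y :: r ∧ q x ∧ p y := by
  induction l with
  | nil => simp at h
  | cons x l ih =>
    cases l with
    | nil => simp at h
    | cons y r =>
      by_cases hxy : q x ∧ p y
      · exact ⟨[], x, y, r, rfl, hxy⟩
      · obtain ⟨s, x', y', r', hl, hq, hp⟩ := ih <| by
          simp only [tail_cons, dropLast_cons_cons, countP_cons, length_cons] at h ⊢
          grind
        exact ⟨x :: s, x', y', r', by rw [hl]; rfl, hq, hp⟩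

theorem exists_isRotated_isChain_cons {r : α → α → Prop} {c : List α}
    (hc : Cycle.Chain r (c : Cycle α)) {z : α} (hz : z ∈ c) :
    ∃ t, (z :: t) ~r c ∧ IsChain r (z :: t) := by
  obtain ⟨s, t, rfl⟩ := append_of_mem hz
  have hrot : (z :: (t ++ s)) ~r (s ++ z :: t) := by
    simpa using (isRotated_append (l := s) (l' := z :: t)).symm
  refine ⟨t ++ s, hrot, ?_⟩
  rw [← Cycle.coe_eq_coe.2 hrot, Cycle.chain_coe_cons] at hc
  exact hc.prefix ⟨[z], by simp⟩

end List

namespace SimpleGraph.Walk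

variable {V : Type*} {G : SimpleGraph V} {u v : V} {p : G.Walk u v}

theorem IsPath.ncard_neighborSet_toSubgraph_eq_one_iff (hp : p.IsPath) (hnil : ¬p.Nil) {x : V}
    (hx : x ∈ p.support) : (p.toSubgraph.neighborSet x).ncard = 1 ↔ x = u ∨ x = v := by
  by_cases hxu : x = u
  · simp [hxu, hp.neighborSet_toSubgraph_startpoint hnil]
  by_cases hxv : x = v
  · simp [hxv, hp.neighborSet_toSubgraph_endpoint hnil]
  obtain ⟨i, rfl, hi⟩ := mem_support_iff_exists_getVert.1 hx
  have hi0 : i ≠ 0 := by rintro rfl; simp at hxu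
  have hil : i ≠ p.length := by rintro rfl; simp at hxv
  simp [hxu, hxv, hp.ncard_neighborSet_toSubgraph_internal_eq_two hi0 (by omega)]

theorem IsHamiltonian.isTree_spanningCoe_toSubgraph [Fintype V] (hp : p.IsHamiltonian) :
    p.toSubgraph.spanningCoe.IsTree := by
  have hspan : p.toSubgraph.IsSpanning := fun x => by simp [hp.mem_support]
  refine isTree_iff_connected_and_card.2
    ⟨(p.toSubgraph.spanningCoeEquivCoeOfSpanning hspan).connected_iff.2 p.toSubgraph_connected.coe,
      ?_⟩
  have hV : 0 < Fintype.card V := Fintype.card_pos_iff.2 ⟨u⟩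
  rw [Subgraph.edgeSet_spanningCoe, edgeSet_toSubgraph, edgeSet, Set.coe_ofPred,
    ← Nat.card_congr (List.Nodup.getEquiv _ hp.isPath.isTrail.edges_nodup), Nat.card_fin,
    length_edges, hp.length_eq, Nat.card_eq_fintype_card]
  omega

theorem IsHamiltonian.hasSpanningEndTree_two [Fintype V] [Nontrivial V] (hp : p.IsHamiltonian) :
    G.HasSpanningEndTree 2 := by
  have huv : u ≠ v := by
    rintro rfl
    have := length_eq_zero_iff.2 (isPath_iff_nil.1 hp.isPath)
    have := Fintype.one_lt_card (α := V)
    have := hp.length_eq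
    omega
  refine ⟨_, p.toSubgraph.spanningCoe_le, hp.isTree_spanningCoe_toSubgraph, ?_⟩
  have hleaves : {x | p.toSubgraph.spanningCoe.degree x = 1} = {u, v} := by
    ext x
    rw [Set.mem_ofPred_eq, Subgraph.degree_spanningCoe, Subgraph.degree,
      ← Nat.card_eq_fintype_card, Nat.card_coe_set_eq,
      hp.isPath.ncard_neighborSet_toSubgraph_eq_one_iff (not_nil_of_ne huv) (hp.mem_support x)]
    rfl
  rw [leafCount, hleaves, Set.ncard_pair huv]

end SimpleGraph.Walk

namespace SimpleGraph

variable {V : Type*} {G : SimpleGraph V}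

theorem isChain_adj_reverse {l : List V} : l.reverse.IsChain G.Adj ↔ l.IsChain G.Adj := by
  simp only [List.isChain_reverse, G.adj_comm]

theorem degree_eq_countP [Fintype V] {l : List V} (hl : l.Nodup) {v : V}
    (hsub : ∀ w, G.Adj v w → w ∈ l) : G.degree v = l.countP (G.Adj v ·) := by
  have : G.neighborFinset v = (l.filter (G.Adj v ·)).toFinset := by
    ext w
    simpa using hsub w
  rw [← card_neighborFinset_eq_degree, this, List.toFinset_card_of_nodup (hl.filter _),
    List.countP_eq_length_filter]

theorem commonNeighbors_nonempty_of_card_le [Fintype V] {v w : V} (hvw : v ≠ w)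
    (hadj : ¬G.Adj v w) (h : Fintype.card V ≤ G.degree v + G.degree w + 1) :
    (G.commonNeighbors v w).Nonempty := by
  by_contra! hempty
  have hdisj : Disjoint (G.neighborFinset v) (G.neighborFinset w) :=
    Finset.disjoint_left.2 fun u hv hw =>
      hempty.subset ((mem_commonNeighbors G).2 ⟨by simpa using hv, by simpa using hw⟩)
  have hsub : G.neighborFinset v ∪ G.neighborFinset w ⊆ ({v, w} : Finset V)ᶜ := by
    intro u
    simp only [Finset.mem_union, mem_neighborFinset, Finset.mem_compl, Finset.mem_insert,
      Finset.mem_singleton]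
    rintro (hu | hu) (rfl | rfl) <;> simp_all [G.adj_comm]
  have hcard := Finset.card_le_card hsub
  have hpair := Finset.card_le_univ ({v, w} : Finset V)
  rw [Finset.card_union_of_disjoint hdisj, Finset.card_compl, Finset.card_pair hvw,
    card_neighborFinset_eq_degree, card_neighborFinset_eq_degree] at hcard
  rw [Finset.card_pair hvw] at hpair
  omega

theorem preconnected_of_ore [Fintype V]
    (hdeg : ∀ v w : V, v ≠ w → ¬G.Adj v w → Fintype.card V - 1 ≤ G.degree v + G.degree w) :
    G.Preconnected := by
  intro v w
  by_cases hvw : v = w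
  · exact hvw ▸ .rfl
  by_cases hadj : G.Adj v w
  · exact hadj.reachable
  have hV : 0 < Fintype.card V := Fintype.card_pos_iff.2 ⟨v⟩
  obtain ⟨u, hu⟩ :=
    commonNeighbors_nonempty_of_card_le hvw hadj (by have := hdeg v w hvw hadj; omega)
  obtain ⟨hvu, hwu⟩ := (mem_commonNeighbors G).1 hu
  exact hvu.reachable.trans hwu.reachable.symm

theorem cycleChain_reverse_append {t d : List V} (ht : t ≠ []) (hd : d ≠ [])
    (hc : (t ++ d).IsChain G.Adj) (hhead : G.Adj (t.head ht) (d.head hd))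
    (hlast : G.Adj (d.getLast hd) (t.getLast ht)) :
    Cycle.Chain G.Adj (t.reverse ++ d : List V) := by
  rw [Cycle.chain_ne_nil _ (by simp [ht]), List.getLast_append_right hd, ← List.cons_append]
  refine List.IsChain.append ?_ hc.right_of_append ?_
  · refine List.IsChain.cons (isChain_adj_reverse.2 hc.left_of_append) ?_
    simp [List.head?_reverse, List.getLast?_eq_some_getLast ht, hlast]
  · simp [List.head?_eq_some_head hd, List.getLast?_cons, List.head?_eq_some_head ht, hhead]

theorem exists_perm_cycleChain_of_length_le_degree_add_degree [Fintype V] {l : List V}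
    (hne : l ≠ []) (hnd : l.Nodup) (hc : l.IsChain G.Adj)
    (ha : ∀ w, G.Adj (l.head hne) w → w ∈ l) (hb : ∀ w, G.Adj (l.getLast hne) w → w ∈ l)
    (hlen : l.length ≤ G.degree (l.head hne) + G.degree (l.getLast hne)) :
    ∃ c : List V, c.Perm l ∧ Cycle.Chain G.Adj (c : Cycle V) := by
  generalize hl_head : l.head hne = a at *
  generalize hl_last : l.getLast hne = b at *
  have hdeg_a : G.degree a = l.tail.countP (G.Adj a ·) := by
    rw [degree_eq_countP hnd ha]
    nth_rw 1 [← List.cons_head_tail hne]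
    simp [hl_head]
  have hdeg_b : G.degree b = l.dropLast.countP (G.Adj b ·) := by
    rw [degree_eq_countP hnd hb]
    nth_rw 1 [← List.dropLast_concat_getLast hne]
    simp [hl_last, List.countP_append]
  obtain ⟨s, x, y, r, rfl, hbx, hay⟩ := List.exists_eq_append_cons_cons_of_length_tail_lt l
    (p := (G.Adj a ·)) (q := (G.Adj b ·))
    (by rw [List.length_tail, ← hdeg_a, ← hdeg_b]; have := List.length_pos_iff.2 hne; omega)
  refine ⟨(s ++ [x]).reverse ++ y :: r,
    ((List.reverse_perm (s ++ [x])).append_right (y :: r)).trans (by simp),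
    cycleChain_reverse_append (by simp) (by simp) (by simpa using hc) ?_ ?_⟩
  · rw [← hl_head] at hay
    cases s <;> exact hay
  · rw [← hl_last] at hbx
    simpa using hbx

theorem exists_nodup_isChain_length_succ_of_ore [Fintype V]
    (hdeg : ∀ v w : V, v ≠ w → ¬G.Adj v w → Fintype.card V - 1 ≤ G.degree v + G.degree w)
    {l : List V} (hne : l ≠ []) (hnd : l.Nodup) (hc : l.IsChain G.Adj) {x : V} (hx : x ∉ l) :
    ∃ l' : List V, l'.Nodup ∧ l'.IsChain G.Adj ∧ l'.length = l.length + 1 := by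
  by_cases ha : ∃ w, G.Adj (l.head hne) w ∧ w ∉ l
  · obtain ⟨w, haw, hw⟩ := ha
    exact ⟨w :: l, List.nodup_cons.2 ⟨hw, hnd⟩, hc.cons_of_ne_nil hne haw.symm, rfl⟩
  by_cases hb : ∃ w, G.Adj (l.getLast hne) w ∧ w ∉ l
  · obtain ⟨w, hbw, hw⟩ := hb
    exact ⟨w :: l.reverse, List.nodup_cons.2 ⟨by simpa using hw, List.nodup_reverse.2 hnd⟩,
      (isChain_adj_reverse.2 hc).cons_of_ne_nil (by simpa using hne) (by simpa using hbw.symm),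
      by simp⟩
  push Not at ha hb
  obtain ⟨q⟩ := preconnected_of_ore hdeg x (l.head hne)
  obtain ⟨⟨⟨y, z⟩, hyz⟩, -, hy, hz⟩ :=
    q.exists_boundary_dart {v | v ∉ l} hx (by simp [List.head_mem hne])
  simp only [Set.mem_ofPred_eq, not_not] at hy hz
  obtain ⟨c, hcl, hcc⟩ : ∃ c : List V, c.Perm l ∧ Cycle.Chain G.Adj (c : Cycle V) := by
    by_cases hba : G.Adj (l.getLast hne) (l.head hne)
    · exact ⟨l, .refl l, (Cycle.chain_ne_nil _ hne).2 (hc.cons_of_ne_nil hne hba)⟩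
    have hab : l.head hne ≠ l.getLast hne := by
      intro h
      obtain ⟨a, rfl⟩ := (hnd.head_eq_getLast_iff hne).1 h
      exact hy (ha y (by simpa [List.mem_singleton.1 hz] using hyz.symm))
    refine exists_perm_cycleChain_of_length_le_degree_add_degree hne hnd hc ha hb ?_
    have := hdeg _ _ hab (fun h => hba h.symm)
    have := (List.nodup_cons.2 ⟨hx, hnd⟩).length_le_card
    grind
  obtain ⟨t, hrot, ht⟩ := List.exists_isRotated_isChain_cons hcc (hcl.mem_iff.2 hz)
  refine ⟨y :: z :: t, List.nodup_cons.2 ⟨?_, ?_⟩, ht.cons_of_ne_nil (by simp) hyz, ?_⟩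
  · rwa [hrot.mem_iff, hcl.mem_iff]
  · exact hrot.nodup_iff.2 (hcl.nodup_iff.2 hnd)
  · rw [List.length_cons, hrot.perm.length_eq, hcl.length_eq]

theorem exists_nodup_isChain_forall_mem_of_ore [Fintype V]
    (hdeg : ∀ v w : V, v ≠ w → ¬G.Adj v w → Fintype.card V - 1 ≤ G.degree v + G.degree w)
    {l : List V} (hne : l ≠ []) (hnd : l.Nodup) (hc : l.IsChain G.Adj) :
    ∃ (l' : List V) (_ : l' ≠ []), l'.Nodup ∧ l'.IsChain G.Adj ∧ ∀ x, x ∈ l' := by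
  by_cases hall : ∀ x, x ∈ l
  · exact ⟨l, hne, hnd, hc, hall⟩
  push Not at hall
  obtain ⟨x, hx⟩ := hall
  obtain ⟨l', hnd', hc', hlen'⟩ := exists_nodup_isChain_length_succ_of_ore hdeg hne hnd hc hx
  have := hnd'.length_le_card
  exact exists_nodup_isChain_forall_mem_of_ore hdeg (List.ne_nil_of_length_pos (by omega)) hnd' hc'
termination_by Fintype.card V - l.length

theorem exists_isHamiltonian_of_ore [Fintype V] [Nonempty V]
    (hdeg : ∀ v w : V, v ≠ w → ¬G.Adj v w → Fintype.card V - 1 ≤ G.degree v + G.degree w) :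
    ∃ (u v : V) (p : G.Walk u v), p.IsHamiltonian := by
  obtain ⟨v⟩ := ‹Nonempty V›
  obtain ⟨l, hne, hnd, hc, hall⟩ :=
    exists_nodup_isChain_forall_mem_of_ore hdeg (List.cons_ne_nil v []) (List.nodup_singleton v)
      (List.isChain_singleton v)
  exact ⟨_, _, Walk.ofSupport l hne hc,
    (Walk.IsPath.mk' (by simpa using hnd)).isHamiltonian_of_mem (by simpa using hall)⟩

end SimpleGraph

/-- (Ore) If `|V(G)| ≥ 3` and `deg v + deg w ≥ |V(G)| - 1` for every two non-adjacent
vertices `v, w`, then `G` has a Hamiltonian path, i.e., a spanning tree with exactly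
two leaves. -/
theorem hasSpanningEndTree_two_of_ore {V : Type*} [Fintype V] (G : SimpleGraph V)
    (hcard : 3 ≤ Fintype.card V)
    (hdeg : ∀ v w : V, v ≠ w → ¬ G.Adj v w →
      Fintype.card V - 1 ≤ G.degree v + G.degree w) :
    G.HasSpanningEndTree 2 := by
  have : Nontrivial V := Fintype.one_lt_card_iff_nontrivial.1 (by omega)
  obtain ⟨u, v, p, hp⟩ := G.exists_isHamiltonian_of_ore hdeg
  exact hp.hasSpanningEndTree_two
end
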